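/- Suppose G : ℝ^p → ℝ^p satisfies ⟨Gx − Gy, x − y⟩ ≥ (1/L)·E_ξ[‖G_ξ x − G_ξ y‖²] for all x, y (co-coercivity in expectation), T is multi-valued and ρ-co-hypomonotone (⟨v_x − v_y, x − y⟩ ≥ −ρ‖v_x − v_y‖² for v_x ∈ Tx, v_y ∈ Ty) with ρ ≥ 0, and τ > 0 satisfies Lρ ≤ 1/(1+τ). Then Φ := G + T satisfies, for all x, y and w_x = Gx + v_x ∈ Φx, w_y = Gy + v_y ∈ Φy: ⟨w_x − w_y, x − y⟩ ≥ −((1+τ)ρ/τ)‖w_x − w_y‖² + (1/L − (1+τ)ρ)·E_ξ[‖G_ξ x − G_ξ y‖²]. -/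

import Mathlib

open MeasureTheory

/-!
With `g = Gx - Gy` and `v = v_x - v_y`, co-coercivity bounds `⟪g, x - y⟫` below by `I / L`
(`I` the mean squared oracle difference) and co-hypomonotonicity bounds `⟪v, x - y⟫` below by
`-ρ‖v‖²`. Young's inequality applied to `v = (g + v) - g` trades `‖v‖²` for
`((1+τ)/τ)‖g + v‖² + (1+τ)‖g‖²`, and Jensen's inequality gives `‖g‖² ≤ I`.
-/

section InnerProduct

variable {E : Type*} [NormedAddCommGroup E] [InnerProductSpace ℝ E]

theorem norm_add_sq_le_mul_add_mul (a b : E) {τ : ℝ} (hτ : 0 < τ) :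
    ‖a + b‖ ^ 2 ≤ (1 + τ) * ‖a‖ ^ 2 + (1 + τ) / τ * ‖b‖ ^ 2 := by
  have hinner : inner ℝ a b ≤ ‖a‖ * ‖b‖ := real_inner_le_norm a b
  have hamgm : 2 * (‖a‖ * ‖b‖) ≤ τ * ‖a‖ ^ 2 + ‖b‖ ^ 2 / τ := by
    rw [← sub_nonneg]
    have hsq : τ * ‖a‖ ^ 2 + ‖b‖ ^ 2 / τ - 2 * (‖a‖ * ‖b‖) = (τ * ‖a‖ - ‖b‖) ^ 2 / τ := by
      field_simp; ring
    rw [hsq]; positivity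
  have hcoef : (1 + τ) / τ * ‖b‖ ^ 2 = ‖b‖ ^ 2 + ‖b‖ ^ 2 / τ := by field_simp; ring
  rw [norm_add_sq_real, hcoef]
  linarith

theorem inner_add_ge_of_cocoercive_of_cohypomonotone {g v d : E} {I L ρ τ : ℝ}
    (hρ : 0 ≤ ρ) (hτ : 0 < τ) (hgI : ‖g‖ ^ 2 ≤ I)
    (hg : inner ℝ g d ≥ 1 / L * I) (hv : inner ℝ v d ≥ -ρ * ‖v‖ ^ 2) :
    inner ℝ (g + v) d ≥ -((1 + τ) * ρ / τ) * ‖g + v‖ ^ 2 + (1 / L - (1 + τ) * ρ) * I := by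
  have hyoung : ‖v‖ ^ 2 ≤ (1 + τ) * I + (1 + τ) / τ * ‖g + v‖ ^ 2 := by
    calc ‖v‖ ^ 2 = ‖-g + (g + v)‖ ^ 2 := by rw [neg_add_cancel_left]
      _ ≤ (1 + τ) * ‖-g‖ ^ 2 + (1 + τ) / τ * ‖g + v‖ ^ 2 := norm_add_sq_le_mul_add_mul _ _ hτ
      _ ≤ (1 + τ) * I + (1 + τ) / τ * ‖g + v‖ ^ 2 := by
        rw [norm_neg]; gcongr
  have hcoef : (1 + τ) * ρ / τ = ρ * ((1 + τ) / τ) := by ring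
  rw [inner_add_left, hcoef]
  nlinarith [mul_le_mul_of_nonneg_left hyoung hρ]

end InnerProduct

theorem sq_norm_integral_sub_le {Ω E : Type*} [MeasurableSpace Ω] {μ : Measure Ω}
    [IsProbabilityMeasure μ] [NormedAddCommGroup E] [InnerProductSpace ℝ E] [CompleteSpace E]
    {f g : Ω → E} (hfg : Integrable (fun ω => f ω - g ω) μ)
    (hfg2 : Integrable (fun ω => ‖f ω - g ω‖ ^ 2) μ) :
    ‖∫ ω, f ω ∂μ - ∫ ω, g ω ∂μ‖ ^ 2 ≤ ∫ ω, ‖f ω - g ω‖ ^ 2 ∂μ := by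
  by_cases hf : Integrable f μ
  · have hg : Integrable g μ := (hf.sub hfg).congr (ae_of_all _ fun ω => by simp)
    rw [← integral_sub hf hg]
    exact ((convexOn_norm convex_univ).pow (fun _ _ => norm_nonneg _) 2).map_integral_le
      (continuous_norm.pow 2).continuousOn isClosed_univ (by simp) hfg hfg2
  · -- neither integral is defined, so the left side is a junk `0`
    have hg : ¬ Integrable g μ := fun hg => hf ((hfg.add hg).congr (ae_of_all _ fun ω => by simp))
    rw [integral_undef hf, integral_undef hg, sub_self, norm_zero]
    simpa using integral_nonneg fun ω => sq_nonneg ‖f ω - g ω‖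

theorem stmt3_general {p : ℕ} {Ω : Type*} [MeasurableSpace Ω] (μ : Measure Ω) [IsProbabilityMeasure μ]
    (G : EuclideanSpace ℝ (Fin p) → EuclideanSpace ℝ (Fin p))
    (Gξ : Ω → EuclideanSpace ℝ (Fin p) → EuclideanSpace ℝ (Fin p))
    (T : EuclideanSpace ℝ (Fin p) → Set (EuclideanSpace ℝ (Fin p)))
    (L ρ τ : ℝ) (hρ : 0 ≤ ρ) (hτ : 0 < τ)
    (hunbiased : ∀ x, G x = ∫ ω, Gξ ω x ∂μ)
    (hint : ∀ x y, Integrable (fun ω => Gξ ω x - Gξ ω y) μ)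
    (hint2 : ∀ x y, Integrable (fun ω => ‖Gξ ω x - Gξ ω y‖ ^ 2) μ)
    (hcoco : ∀ x y, (inner ℝ (G x - G y) (x - y) : ℝ)
      ≥ (1 / L) * ∫ ω, ‖Gξ ω x - Gξ ω y‖ ^ 2 ∂μ)
    (hT : ∀ x y vx vy, vx ∈ T x → vy ∈ T y →
      (inner ℝ (vx - vy) (x - y) : ℝ) ≥ -ρ * ‖vx - vy‖ ^ 2) :
    ∀ x y vx vy, vx ∈ T x → vy ∈ T y →
      (inner ℝ ((G x + vx) - (G y + vy)) (x - y) : ℝ) ≥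
        -((1 + τ) * ρ / τ) * ‖(G x + vx) - (G y + vy)‖ ^ 2
        + (1 / L - (1 + τ) * ρ) * ∫ ω, ‖Gξ ω x - Gξ ω y‖ ^ 2 ∂μ := by
  intro x y vx vy hvx hvy
  have hjensen : ‖G x - G y‖ ^ 2 ≤ ∫ ω, ‖Gξ ω x - Gξ ω y‖ ^ 2 ∂μ := by
    rw [hunbiased x, hunbiased y]
    exact sq_norm_integral_sub_le (hint x y) (hint2 x y)
  rw [add_sub_add_comm]
  exact inner_add_ge_of_cocoercive_of_cohypomonotone hρ hτ hjensen (hcoco x y)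
    (hT x y vx vy hvx hvy)

theorem stmt3 {p : ℕ} {Ω : Type*} [MeasurableSpace Ω] (μ : Measure Ω) [IsProbabilityMeasure μ]
    (G : EuclideanSpace ℝ (Fin p) → EuclideanSpace ℝ (Fin p))
    (Gξ : Ω → EuclideanSpace ℝ (Fin p) → EuclideanSpace ℝ (Fin p))
    (T : EuclideanSpace ℝ (Fin p) → Set (EuclideanSpace ℝ (Fin p)))
    (L ρ τ : ℝ) (hL : 0 < L) (hρ : 0 ≤ ρ) (hτ : 0 < τ) (hLρ : L * ρ ≤ 1 / (1 + τ))
    (hunbiased : ∀ x, G x = ∫ ω, Gξ ω x ∂μ)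
    (hint : ∀ x y, Integrable (fun ω => Gξ ω x - Gξ ω y) μ)
    (hint2 : ∀ x y, Integrable (fun ω => ‖Gξ ω x - Gξ ω y‖ ^ 2) μ)
    (hcoco : ∀ x y, (inner ℝ (G x - G y) (x - y) : ℝ)
      ≥ (1 / L) * ∫ ω, ‖Gξ ω x - Gξ ω y‖ ^ 2 ∂μ)
    (hT : ∀ x y vx vy, vx ∈ T x → vy ∈ T y →
      (inner ℝ (vx - vy) (x - y) : ℝ) ≥ -ρ * ‖vx - vy‖ ^ 2) :
    ∀ x y vx vy, vx ∈ T x → vy ∈ T y →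
      (inner ℝ ((G x + vx) - (G y + vy)) (x - y) : ℝ) ≥
        -((1 + τ) * ρ / τ) * ‖(G x + vx) - (G y + vy)‖ ^ 2
        + (1 / L - (1 + τ) * ρ) * ∫ ω, ‖Gξ ω x - Gξ ω y‖ ^ 2 ∂μ :=
  stmt3_general μ G Gξ T L ρ τ hρ hτ hunbiased hint hint2 hcoco hT
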